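/- Any two ℤ-coverings of a given Lie superalgebra g are isomorphic as ℤ-graded Lie superalgebras, via a unique isomorphism commuting with the covering projections. -/

import Mathlib

open scoped TensorProduct

/-- The sign `(-1)^(i*j)` for integer degrees `i j`. -/
def ssign (i j : ℤ) : ℤ := if Even (i * j) then 1 else -1

/-- A Lie superalgebra structure on a `K`-vector space `g`. -/
structure LieSuperAlgebra (K : Type*) [Field K] (g : Type*) [AddCommGroup g] [Module K g] where
  grading : ZMod 2 → Submodule K g
  isInternal : DirectSum.IsInternal grading
  bracket : g →ₗ[K] g →ₗ[K] g
  bracket_mem : ∀ (i j : ZMod 2) (x y : g), x ∈ grading i → y ∈ grading j →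
    bracket x y ∈ grading (i + j)
  super_antisymm : ∀ (i j : ZMod 2) (x y : g), x ∈ grading i → y ∈ grading j →
    bracket x y = (-((-1 : ℤ) ^ (i.val * j.val))) • bracket y x
  super_jacobi : ∀ (i j : ZMod 2) (x y z : g), x ∈ grading i → y ∈ grading j →
    bracket x (bracket y z) =
      bracket (bracket x y) z + ((-1 : ℤ) ^ (i.val * j.val)) • bracket y (bracket x z)

/-- A ℤ-graded Lie superalgebra with parity-matched grading. -/
structure ZGradedLieSuperAlgebra (K : Type*) [Field K] (p : Type*)
    [AddCommGroup p] [Module K p] where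
  grading : ℤ → Submodule K p
  isInternal : DirectSum.IsInternal grading
  bracket : p →ₗ[K] p →ₗ[K] p
  bracket_mem : ∀ (i j : ℤ) (x y : p), x ∈ grading i → y ∈ grading j →
    bracket x y ∈ grading (i + j)
  super_antisymm : ∀ (i j : ℤ) (x y : p), x ∈ grading i → y ∈ grading j →
    bracket x y = (-(ssign i j)) • bracket y x
  super_jacobi : ∀ (i j : ℤ) (x y z : p), x ∈ grading i → y ∈ grading j →
    bracket x (bracket y z) =
      bracket (bracket x y) z + (ssign i j) • bracket y (bracket x z)

variable {K : Type*} [Field K]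
variable {g g' g'' p p' p'' a a' : Type*}
  [AddCommGroup g] [Module K g] [AddCommGroup g'] [Module K g']
  [AddCommGroup g''] [Module K g'']
  [AddCommGroup p] [Module K p] [AddCommGroup p'] [Module K p']
  [AddCommGroup p''] [Module K p'']
  [AddCommGroup a] [Module K a] [AddCommGroup a'] [Module K a']

/-- An (even) homomorphism of Lie superalgebras. -/
def IsSuperHom (G : LieSuperAlgebra K g) (G' : LieSuperAlgebra K g') (f : g →ₗ[K] g') : Prop :=
  (∀ (i : ZMod 2) (x : g), x ∈ G.grading i → f x ∈ G'.grading i) ∧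
  ∀ x y : g, f (G.bracket x y) = G'.bracket (f x) (f y)

/-- A ℤ-graded homomorphism of ℤ-graded Lie superalgebras. -/
def IsZGradedHom (P : ZGradedLieSuperAlgebra K p) (P' : ZGradedLieSuperAlgebra K p')
    (f : p →ₗ[K] p') : Prop :=
  (∀ (s : ℤ) (x : p), x ∈ P.grading s → f x ∈ P'.grading s) ∧
  ∀ x y : p, f (P.bracket x y) = P'.bracket (f x) (f y)

/-- A homomorphism from a ℤ-graded Lie superalgebra to a Lie superalgebra:
an even linear map preserving brackets, sending degree `s` into parity `s mod 2`. -/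
def IsHomToSuper (P : ZGradedLieSuperAlgebra K p) (G : LieSuperAlgebra K g)
    (f : p →ₗ[K] g) : Prop :=
  (∀ (s : ℤ) (x : p), x ∈ P.grading s → f x ∈ G.grading (s : ZMod 2)) ∧
  ∀ x y : p, f (P.bracket x y) = G.bracket (f x) (f y)

/-- `(P, π)` is a ℤ-covering of the Lie superalgebra `G`: a homomorphism restricting to a
bijection `p_s → g_{s̄}` for every `s : ℤ`. -/
def IsZCovering (G : LieSuperAlgebra K g) (P : ZGradedLieSuperAlgebra K p)
    (π : p →ₗ[K] g) : Prop :=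
  IsHomToSuper P G π ∧
  ∀ s : ℤ, Set.BijOn π (P.grading s : Set p) (G.grading (s : ZMod 2) : Set g)

/-- `(P, π)` is a ℤ^{≥0}-covering of the Lie superalgebra `G`. -/
def IsZNonnegCovering (G : LieSuperAlgebra K g) (P : ZGradedLieSuperAlgebra K p)
    (π : p →ₗ[K] g) : Prop :=
  IsHomToSuper P G π ∧ (∀ s : ℤ, s < 0 → P.grading s = ⊥) ∧
  ∀ s : ℤ, 0 ≤ s → Set.BijOn π (P.grading s : Set p) (G.grading (s : ZMod 2) : Set g)

/-
Both coverings identify each homogeneous piece `p_s` and `p'_s` with the same space `g_{s̄}`, so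
`(π'|_{p'_s})⁻¹ ∘ π|_{p_s}` assembles, through the direct sum decompositions, into a graded linear
map `F : p → p'` over `g`. A graded map over `g` is determined by its composite with `π'`, since
`π'` is injective on each `p'_s`; this gives uniqueness, shows that the reverse construction is
inverse to `F`, and shows that `F` preserves brackets, as `F [x, y]` and `[F x, F y]` are
homogeneous of the same degree with the same image in `g`.
-/

section GradedLinearAlgebra

variable {R ι M M' A : Type*} [Semiring R] [AddCommMonoid M] [Module R M]
  [AddCommMonoid M'] [Module R M'] [AddCommMonoid A] [Module R A]

theorem LinearMap.ext_of_iSup_eq_top {N : ι → Submodule R M} (hN : ⨆ i, N i = ⊤)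
    {u v : M →ₗ[R] A} (h : ∀ i, ∀ x ∈ N i, u x = v x) : u = v :=
  LinearMap.ext_on (s := ⋃ i, (N i : Set M)) (by rw [← Submodule.iSup_eq_span, hN])
    fun _ hx => by
      obtain ⟨i, hi⟩ := Set.mem_iUnion.mp hx
      exact h i _ hi

noncomputable def LinearEquiv.ofBijOn (f : M →ₗ[R] A) {N : Submodule R M} {Q : Submodule R A}
    (h : Set.BijOn f N Q) : N ≃ₗ[R] Q :=
  LinearEquiv.ofBijective (f.restrict h.mapsTo) h.bijective

@[simp]
theorem LinearEquiv.coe_ofBijOn_apply (f : M →ₗ[R] A) {N : Submodule R M} {Q : Submodule R A}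
    (h : Set.BijOn f N Q) (x : N) : (LinearEquiv.ofBijOn f h x : A) = f x :=
  rfl

theorem DirectSum.IsInternal.exists_linearMap_apply_of_mem [DecidableEq ι]
    {N : ι → Submodule R M} (hN : DirectSum.IsInternal N) (φ : ∀ i, N i →ₗ[R] A) :
    ∃ F : M →ₗ[R] A, ∀ i (x : M) (hx : x ∈ N i), F x = φ i ⟨x, hx⟩ := by
  let D := LinearEquiv.ofBijective (DirectSum.coeLinearMap N) hN
  refine ⟨DirectSum.toModule R ι A φ ∘ₗ D.symm.toLinearMap, fun i x hx => ?_⟩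
  have hD : D.symm x = DirectSum.lof R ι (fun i => N i) i ⟨x, hx⟩ :=
    D.symm_apply_eq.mpr (DirectSum.coeLinearMap_lof N i ⟨x, hx⟩).symm
  simp only [LinearMap.comp_apply, LinearEquiv.coe_toLinearMap, hD, DirectSum.toModule_lof]

theorem exists_mapsTo_comp_eq_of_bijOn [DecidableEq ι] {N : ι → Submodule R M}
    {N' : ι → Submodule R M'} {Q : ι → Submodule R A} (hN : DirectSum.IsInternal N)
    {π : M →ₗ[R] A} {π' : M' →ₗ[R] A} (hπ : ∀ i, Set.MapsTo π (N i) (Q i))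
    (hπ' : ∀ i, Set.BijOn π' (N' i) (Q i)) :
    ∃ F : M →ₗ[R] M', (∀ i, Set.MapsTo F (N i) (N' i)) ∧ π' ∘ₗ F = π := by
  obtain ⟨F, hF⟩ := hN.exists_linearMap_apply_of_mem fun i =>
    (N' i).subtype ∘ₗ (LinearEquiv.ofBijOn π' (hπ' i)).symm.toLinearMap ∘ₗ π.restrict (hπ i)
  refine ⟨F, fun i x hx => hF i x hx ▸ Subtype.prop _, ?_⟩
  refine LinearMap.ext_of_iSup_eq_top hN.submodule_iSup_eq_top fun i x hx => ?_
  have h := (LinearEquiv.ofBijOn π' (hπ' i)).apply_symm_apply (π.restrict (hπ i) ⟨x, hx⟩)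
  rw [Subtype.ext_iff, LinearEquiv.coe_ofBijOn_apply] at h
  rw [LinearMap.comp_apply, hF i x hx]
  exact h

theorem LinearMap.eq_of_comp_eq_of_mapsTo {N : ι → Submodule R M} {N' : ι → Submodule R M'}
    (hN : ⨆ i, N i = ⊤) {π' : M' →ₗ[R] A} (hπ' : ∀ i, Set.InjOn π' (N' i))
    {f f' : M →ₗ[R] M'} (hf : ∀ i, Set.MapsTo f (N i) (N' i))
    (hf' : ∀ i, Set.MapsTo f' (N i) (N' i)) (h : π' ∘ₗ f = π' ∘ₗ f') : f = f' :=
  LinearMap.ext_of_iSup_eq_top hN fun i _ hx =>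
    hπ' i (hf i hx) (hf' i hx) (LinearMap.congr_fun h _)

end GradedLinearAlgebra

theorem LinearMap.ext₂_of_iSup_eq_top {R ι ι' M M' A : Type*} [CommSemiring R]
    [AddCommMonoid M] [Module R M] [AddCommMonoid M'] [Module R M'] [AddCommMonoid A]
    [Module R A] {N : ι → Submodule R M} {N' : ι' → Submodule R M'} (hN : ⨆ i, N i = ⊤)
    (hN' : ⨆ j, N' j = ⊤) {B B' : M →ₗ[R] M' →ₗ[R] A}
    (h : ∀ i j, ∀ x ∈ N i, ∀ y ∈ N' j, B x y = B' x y) : B = B' :=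
  LinearMap.ext_of_iSup_eq_top hN fun i x hx =>
    LinearMap.ext_of_iSup_eq_top hN' fun j y hy => h i j x hx y hy

theorem isZGradedHom_of_comp_eq {G : LieSuperAlgebra K g} {P : ZGradedLieSuperAlgebra K p}
    {P' : ZGradedLieSuperAlgebra K p'} {π : p →ₗ[K] g} {π' : p' →ₗ[K] g}
    (hπ : IsHomToSuper P G π) (hπ' : IsHomToSuper P' G π')
    (hinj : ∀ s, Set.InjOn π' (P'.grading s)) {F : p →ₗ[K] p'}
    (hF : ∀ s, Set.MapsTo F (P.grading s) (P'.grading s)) (hcomp : π' ∘ₗ F = π) :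
    IsZGradedHom P P' F := by
  have hπF : ∀ z, π' (F z) = π z := LinearMap.congr_fun hcomp
  have hN := P.isInternal.submodule_iSup_eq_top
  have key : P.bracket.compr₂ F = P'.bracket.compl₁₂ F F :=
    LinearMap.ext₂_of_iSup_eq_top hN hN fun i j x hx y hy =>
      hinj (i + j) (hF _ (P.bracket_mem i j x y hx hy))
        (P'.bracket_mem i j _ _ (hF i hx) (hF j hy)) <| by
          simp only [LinearMap.compl₁₂_apply, hπF, hπ.2, hπ'.2]
  exact ⟨hF, LinearMap.congr_fun₂ key⟩

/-- any two ℤ-coverings of a Lie superalgebra `g` are isomorphic via a unique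
ℤ-graded isomorphism commuting with the covering projections. -/
theorem zCovering_unique_up_to_iso
    (G : LieSuperAlgebra K g)
    (P : ZGradedLieSuperAlgebra K p) (π : p →ₗ[K] g) (hcov : IsZCovering G P π)
    (P' : ZGradedLieSuperAlgebra K p') (π' : p' →ₗ[K] g) (hcov' : IsZCovering G P' π') :
    ∃! f : p →ₗ[K] p', IsZGradedHom P P' f ∧ Function.Bijective f ∧ π'.comp f = π := by
  have hinj : ∀ s, Set.InjOn π (P.grading s) := fun s => (hcov.2 s).injOn
  have hinj' : ∀ s, Set.InjOn π' (P'.grading s) := fun s => (hcov'.2 s).injOn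
  obtain ⟨F, hFgr, hF⟩ := exists_mapsTo_comp_eq_of_bijOn P.isInternal hcov.1.1 hcov'.2
  obtain ⟨F', hF'gr, hF'⟩ := exists_mapsTo_comp_eq_of_bijOn P'.isInternal hcov'.1.1 hcov.2
  have hF'F : F' ∘ₗ F = LinearMap.id :=
    LinearMap.eq_of_comp_eq_of_mapsTo P.isInternal.submodule_iSup_eq_top hinj
      (fun s => (hF'gr s).comp (hFgr s)) (fun s => Set.mapsTo_id _)
      (by rw [← LinearMap.comp_assoc, hF', hF, LinearMap.comp_id])
  have hFF' : F ∘ₗ F' = LinearMap.id :=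
    LinearMap.eq_of_comp_eq_of_mapsTo P'.isInternal.submodule_iSup_eq_top hinj'
      (fun s => (hFgr s).comp (hF'gr s)) (fun s => Set.mapsTo_id _)
      (by rw [← LinearMap.comp_assoc, hF, hF', LinearMap.comp_id])
  refine ⟨F, ⟨isZGradedHom_of_comp_eq hcov.1 hcov'.1 hinj' hFgr hF,
    Function.bijective_iff_has_inverse.mpr
      ⟨F', LinearMap.congr_fun hF'F, LinearMap.congr_fun hFF'⟩, hF⟩, ?_⟩
  rintro f ⟨hf, -, hfcomp⟩
  exact LinearMap.eq_of_comp_eq_of_mapsTo P.isInternal.submodule_iSup_eq_top hinj' hf.1 hFgr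
    (hfcomp.trans hF.symm)
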